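/- In the quotient complex A_1^+ = C / N_1 with induced differential δ̄, the image of U z_6 is nonzero, satisfies δ̄(U z_6) = 0, and does not lie in the image of δ̄; that is, the homology class of U z_6 in H(A_1^+) is nonzero. (This is the statement that the cycle U z_6 is non-zero in H_*(A_1^+), reflecting V_1(T_{2,9} # -T_{2,3;2,5}) > 0.) -/

import Mathlib

/-!
Let `F = ℤ/2ℤ`, `R = F[U, U⁻¹]` (`U = LaurentPolynomial.T 1`), and let `C` be
the free `R`-module on generators `z 0, ..., z 12` with the differential `δ`
of the summand of `CFK^∞(T_{2,9} # -T_{2,3;2,5})`.  Each `z i` has bifiltration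
level `(fa i, fb i)`, and `U^n • z i` has level `(fa i - n, fb i - n)`.  For
`k : ℤ`, `N k` is the `F`-linear span of `{U^n • z i : n ≥ max (fa i) (fb i - k) + 1}`
(the part with `max(i, j-k) < 0`); `δ (N k) ⊆ N k`, and `Aplus k := C ⧸ N k` is
the quotient complex with induced differential `δ̄`, a model for `A_k^+`.

STATEMENT: In `A_1^+ = C ⧸ N 1`, the image of `U • z 6` is nonzero, is a cycle
for the induced differential, and is not a boundary; i.e., its homology class
in `H(A_1^+)` is nonzero.
-/

noncomputable section

abbrev F : Type := ZMod 2

abbrev R : Type := LaurentPolynomial (ZMod 2)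

/-- The variable `U` of the Laurent polynomial ring. -/
def U : R := LaurentPolynomial.T 1

abbrev C : Type := Fin 13 → R

/-- The standard basis of `C`, modeling the generators `z_0, ..., z_12`. -/
def z (i : Fin 13) : C := Pi.single i 1

/-- The first (Alexander `i`) filtration levels of `z_0, ..., z_12`. -/
def fa : Fin 13 → ℤ := ![0, -1, -1, 0, 0, 1, 1, 2, 2, 3, 3, 0, 0]

/-- The second (Alexander `j`) filtration levels of `z_0, ..., z_12`. -/
def fb : Fin 13 → ℤ := ![0, 0, 3, 3, 2, 2, 1, 1, 0, 0, -1, -1, 0]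

/-- `N k` is the `F`-linear span of the `U^n • z i` with
`n ≥ max (fa i) (fb i - k) + 1`, i.e. the part of `C` lying in
`max(i-filtration, j-filtration - k) < 0`. -/
def N (k : ℤ) : Submodule F C :=
  Submodule.span F
    {v : C | ∃ (i : Fin 13) (n : ℤ),
      max (fa i) (fb i - k) + 1 ≤ n ∧ v = (LaurentPolynomial.T n : R) • z i}

/-!
Every `δ z i` contains an even number of the generators `z 2, z 4, z 6, z 8, z 10`, so the
`F`-linear functional `ψ v = [U¹](v 2 + v 4 + v 6 + v 8 + v 10)` kills every boundary of `C`.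
These five generators need at least `U²` to enter `N 1`, so `ψ` also kills `N 1` and descends to
`A_1^+`, where it kills every boundary of `δ̄`; but `ψ (U • z 6) = 1`.
-/

namespace Submodule

variable {K M V : Type*} [Ring K] [AddCommGroup M] [Module K M] [AddCommGroup V] [Module K V]
  {N : Submodule K M} {ψ : M →ₗ[K] V}

theorem mkQ_ne_zero_of_apply_ne_zero (hN : N ≤ LinearMap.ker ψ) {x : M} (hx : ψ x ≠ 0) :
    N.mkQ x ≠ 0 :=
  fun h => hx (hN ((Quotient.mk_eq_zero N).1 h))

theorem liftQ_mapQ_eq_zero (hN : N ≤ LinearMap.ker ψ) {d : M →ₗ[K] M} (hd : N ≤ N.comap d)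
    (hψd : ψ ∘ₗ d = 0) (c : M ⧸ N) : N.liftQ ψ hN (N.mapQ N d hd c) = 0 := by
  induction c using Quotient.induction_on with
  | H v => exact LinearMap.congr_fun hψd v

theorem mapQ_ne_mkQ_of_apply_ne_zero (hN : N ≤ LinearMap.ker ψ) {d : M →ₗ[K] M}
    (hd : N ≤ N.comap d) (hψd : ψ ∘ₗ d = 0) {x : M} (hx : ψ x ≠ 0) (c : M ⧸ N) :
    N.mapQ N d hd c ≠ N.mkQ x := by
  intro h
  have := liftQ_mapQ_eq_zero hN hd hψd c
  rw [h, mkQ_apply, liftQ_apply] at this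
  exact hx this

end Submodule

instance : CharP R 2 := charP_of_injective_algebraMap' F 2

def evenCoordSum : C →ₗ[R] R :=
  (LinearMap.proj 2 : C →ₗ[R] R) + LinearMap.proj 4 + LinearMap.proj 6 + LinearMap.proj 8 +
    LinearMap.proj 10

theorem evenCoordSum_comp_eq_zero (δ : C →ₗ[R] C)
    (h0 : δ (z 0) = z 1) (h1 : δ (z 1) = 0)
    (h2 : δ (z 2) = z 1) (h3 : δ (z 3) = z 2 + z 4)
    (h4 : δ (z 4) = z 1) (h5 : δ (z 5) = z 0 + z 4 + z 6)
    (h6 : δ (z 6) = 0) (h7 : δ (z 7) = z 6 + z 8 + z 12)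
    (h8 : δ (z 8) = z 11) (h9 : δ (z 9) = z 8 + z 10)
    (h10 : δ (z 10) = z 11) (h11 : δ (z 11) = 0)
    (h12 : δ (z 12) = z 11) :
    evenCoordSum ∘ₗ δ = 0 := by
  refine (Pi.basisFun R (Fin 13)).ext fun i => ?_
  rw [Pi.basisFun_apply, ← z]
  fin_cases i <;>
    simp [h0, h1, h2, h3, h4, h5, h6, h7, h8, h9, h10, h11, h12] <;>
    simp [evenCoordSum, z, CharTwo.add_self_eq_zero]

def coeffU : R →ₗ[F] F :=
  Finsupp.lapply 1 ∘ₗ (AddMonoidAlgebra.coeffLinearEquiv F).toLinearMap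

def ψ : C →ₗ[F] F :=
  coeffU ∘ₗ evenCoordSum.restrictScalars F

theorem coeffU_T (n : ℤ) : coeffU (LaurentPolynomial.T n) = if n = 1 then 1 else 0 :=
  LaurentPolynomial.T_apply 1 n

theorem ψ_smul_z (p : R) (i : Fin 13) :
    ψ (p • z i) = if i = 2 ∨ i = 4 ∨ i = 6 ∨ i = 8 ∨ i = 10 then coeffU p else 0 := by
  fin_cases i <;> simp [ψ, evenCoordSum, z]

theorem ψ_U_smul_z_six : ψ (U • z 6) = 1 := by
  rw [ψ_smul_z, U, coeffU_T]
  decide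

theorem N_one_le_ker_ψ : N 1 ≤ LinearMap.ker ψ := by
  rw [N, Submodule.span_le]
  rintro v ⟨i, n, hn, rfl⟩
  rw [SetLike.mem_coe, LinearMap.mem_ker, ψ_smul_z]
  split_ifs with hi
  · have hmax : 1 ≤ max (fa i) (fb i - 1) := by
      rcases hi with rfl | rfl | rfl | rfl | rfl <;> decide
    rw [coeffU_T, if_neg (by omega)]
  · rfl

theorem ψ_comp_eq_zero {δ : C →ₗ[R] C} (hδ : evenCoordSum ∘ₗ δ = 0) :
    ψ ∘ₗ δ.restrictScalars F = 0 :=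
  LinearMap.ext fun v => congrArg coeffU (LinearMap.congr_fun hδ v)

theorem Uz6_nonzero_in_homology_of_A1plus
    (δ : C →ₗ[R] C)
    (h0 : δ (z 0) = z 1) (h1 : δ (z 1) = 0)
    (h2 : δ (z 2) = z 1) (h3 : δ (z 3) = z 2 + z 4)
    (h4 : δ (z 4) = z 1) (h5 : δ (z 5) = z 0 + z 4 + z 6)
    (h6 : δ (z 6) = 0) (h7 : δ (z 7) = z 6 + z 8 + z 12)
    (h8 : δ (z 8) = z 11) (h9 : δ (z 9) = z 8 + z 10)
    (h10 : δ (z 10) = z 11) (h11 : δ (z 11) = 0)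
    (h12 : δ (z 12) = z 11)
    (hstab : N 1 ≤ (N 1).comap (LinearMap.restrictScalars F δ)) :
    letI π : C →ₗ[F] C ⧸ N 1 := (N 1).mkQ
    letI δbar : (C ⧸ N 1) →ₗ[F] C ⧸ N 1 :=
      Submodule.mapQ (N 1) (N 1) (LinearMap.restrictScalars F δ) hstab
    π (U • z 6) ≠ 0 ∧
    δbar (π (U • z 6)) = 0 ∧
    ∀ c : C ⧸ N 1, δbar c ≠ π (U • z 6) := by
  have hψ : ψ (U • z 6) ≠ 0 := by rw [ψ_U_smul_z_six]; exact one_ne_zero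
  have hψδ := ψ_comp_eq_zero <|
    evenCoordSum_comp_eq_zero δ h0 h1 h2 h3 h4 h5 h6 h7 h8 h9 h10 h11 h12
  refine ⟨Submodule.mkQ_ne_zero_of_apply_ne_zero N_one_le_ker_ψ hψ, ?_,
    Submodule.mapQ_ne_mkQ_of_apply_ne_zero N_one_le_ker_ψ hstab hψδ hψ⟩
  simp [h6]

end
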